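/- arXiv:1605.07713 — 2 statements merged into one kernel-verified Lean document; each statement's English description precedes it below -/
import Mathlib

section
/- Let $u_0, U_1 : \mathbb{R} \to \mathbb{R}$ be continuous, compactly supported, with $U_1' = u_1$, and suppose the d'Alembert solution $u(x,t) = \frac{1}{2}(u_0(x-t) - U_1(x-t)) + \frac{1}{2}(u_0(x+t) + U_1(x+t))$ is nonnegative on all of $\mathbb{R}^2$. Then $u_0(x) \geq |U_1(x)|$ for all $x \in \mathbb{R}$. -/
/-- for compactly supported data, nonnegativity of the d'Alembert
solution forces `u₀ ≥ |U₁|`. -/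
theorem dalembert_positive_necessary
    (u₀ u₁ U₁ : ℝ → ℝ)
    (hc₀ : Continuous u₀) (hcU : Continuous U₁)
    (hs₀ : HasCompactSupport u₀) (hsU : HasCompactSupport U₁)
    (hU' : ∀ x, deriv U₁ x = u₁ x)
    (u : ℝ → ℝ → ℝ)
    (hu : ∀ x t, u x t = (u₀ (x - t) - U₁ (x - t)) / 2 + (u₀ (x + t) + U₁ (x + t)) / 2)
    (hpos : ∀ x t : ℝ, 0 ≤ u x t) :
    ∀ x : ℝ, |U₁ x| ≤ u₀ x := by
  obtain ⟨R₀, hR₀, h0⟩ := hs₀.exists_pos_le_norm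
  obtain ⟨R₁, hR₁, h1⟩ := hsU.exists_pos_le_norm
  intro x
  set t : ℝ := |x| + R₀ + R₁ with ht
  have hxt : R₀ ≤ ‖x + 2 * t‖ ∧ R₁ ≤ ‖x + 2 * t‖ := by
    have hx := abs_nonneg x
    have h : R₀ ≤ x + 2 * t ∧ R₁ ≤ x + 2 * t := by
      constructor <;> linarith [ht, neg_abs_le x, abs_nonneg x]
    constructor <;> [exact h.1.trans (le_abs_self _); exact h.2.trans (le_abs_self _)]
  have hxt' : R₀ ≤ ‖x - 2 * t‖ ∧ R₁ ≤ ‖x - 2 * t‖ := by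
    have h : R₀ ≤ -(x - 2 * t) ∧ R₁ ≤ -(x - 2 * t) := by
      constructor <;> linarith [ht, le_abs_self x, abs_nonneg x]
    constructor <;> [exact h.1.trans (neg_le_abs _); exact h.2.trans (neg_le_abs _)]
  have key1 : U₁ x ≤ u₀ x := by
    have := hpos (x + t) t
    rw [hu] at this
    have e1 : x + t - t = x := by ring
    have e2 : x + t + t = x + 2 * t := by ring
    rw [e1, e2, h0 _ hxt.1, h1 _ hxt.2] at this
    linarith
  have key2 : -U₁ x ≤ u₀ x := by
    have := hpos (x - t) t
    rw [hu] at this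
    have e1 : x - t - t = x - 2 * t := by ring
    have e2 : x - t + t = x := by ring
    rw [e1, e2, h0 _ hxt'.1, h1 _ hxt'.2] at this
    linarith
  rw [abs_le]
  exact ⟨by linarith, key1⟩
end

section
/- Let $Q(x) = (1+|x|^2/3)^{-1/2}$ on $\mathbb{R}^3$ and let $u_1(x) = Q_r(|x|) + Q(|x|)/|x|$. Then $\frac{1}{2}\int_{\mathbb{R}^3} u_1^2\, dx = \frac{3\sqrt{3}\pi^2}{8} = \frac{1}{2}\|\nabla Q\|_{L^2}^2$; in particular $\int_{\mathbb{R}^3}\big(2 Q_r Q/r + Q^2/r^2\big)\, dx = 0$ and $\|u_1\|_{L^2} = \|\nabla Q\|_{L^2}$. -/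
open MeasureTheory
open Filter Set Real


-- tendsto lemmas
lemma tendsto_aux1 : Tendsto (fun t : ℝ => t / (1 + t ^ 2)) atTop (nhds 0) := by
  have h1 : Tendsto (fun t : ℝ => t⁻¹ + t) atTop atTop := by
    refine tendsto_atTop_mono' _ ?_ tendsto_id
    filter_upwards [eventually_gt_atTop 0] with t ht
    have : 0 ≤ t⁻¹ := by positivity
    simp only [id]
    linarith
  refine (h1.inv_tendsto_atTop).congr' ?_
  filter_upwards [eventually_gt_atTop 0] with t ht
  simp only [Pi.inv_apply]
  field_simp

lemma tendsto_sq_atTop : Tendsto (fun t : ℝ => 1 + t ^ 2) atTop atTop :=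
  tendsto_atTop_add_const_left _ 1 (tendsto_pow_atTop two_ne_zero)

lemma tendsto_aux2 : Tendsto (fun t : ℝ => t / (1 + t ^ 2) ^ 2) atTop (nhds 0) := by
  have h2 : Tendsto (fun t : ℝ => (1 + t ^ 2)⁻¹) atTop (nhds 0) :=
    tendsto_sq_atTop.inv_tendsto_atTop
  have h3 := tendsto_aux1.mul h2
  rw [mul_zero] at h3
  exact h3.congr fun t => by rw [sq (1 + t ^ 2), ← div_div, div_eq_mul_inv, div_eq_mul_inv]

lemma tendsto_arctan' : Tendsto Real.arctan atTop (nhds (π / 2)) :=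
  tendsto_arctan_atTop.mono_right nhdsWithin_le_nhds

lemma hasDerivAt_one_add_sq (t : ℝ) : HasDerivAt (fun t : ℝ => 1 + t ^ 2) (2 * t) t := by
  simpa using ((hasDerivAt_pow 2 t).const_add 1)

lemma intG : ∫ t in Ioi (0:ℝ), 1 / (1 + t ^ 2) ^ 3 = 3 * π / 16 := by
  have hder : ∀ t ∈ Ici (0:ℝ), HasDerivAt
      (fun t : ℝ => 3/8 * Real.arctan t + (3/8 * (t / (1 + t ^ 2)) + 1/4 * (t / (1 + t ^ 2) ^ 2)))
      (1 / (1 + t ^ 2) ^ 3) t := by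
    intro t _
    have hu : (0:ℝ) < 1 + t ^ 2 := by positivity
    have h1 := hasDerivAt_one_add_sq t
    have h2 : HasDerivAt (fun t : ℝ => t / (1 + t ^ 2))
        ((1 * (1 + t ^ 2) - t * (2 * t)) / (1 + t ^ 2) ^ 2) t :=
      (hasDerivAt_id t).div h1 hu.ne'
    have h3 : HasDerivAt (fun t : ℝ => (1 + t ^ 2) ^ 2) (2 * (1 + t ^ 2) ^ 1 * (2 * t)) t :=
      h1.pow 2
    have h4 : HasDerivAt (fun t : ℝ => t / (1 + t ^ 2) ^ 2)
        ((1 * (1 + t ^ 2) ^ 2 - t * (2 * (1 + t ^ 2) ^ 1 * (2 * t))) / ((1 + t ^ 2) ^ 2) ^ 2) t :=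
      (hasDerivAt_id t).div h3 (by positivity)
    have h5 := ((Real.hasDerivAt_arctan t).const_mul (3/8:ℝ)).add
      ((h2.const_mul (3/8:ℝ)).add (h4.const_mul (1/4:ℝ)))
    refine h5.congr_deriv ?_
    field_simp
    ring
  have htend : Tendsto
      (fun t : ℝ => 3/8 * Real.arctan t + (3/8 * (t / (1 + t ^ 2)) + 1/4 * (t / (1 + t ^ 2) ^ 2)))
      atTop (nhds (3 * π / 16)) := by
    have := (tendsto_arctan'.const_mul (3/8:ℝ)).add
      ((tendsto_aux1.const_mul (3/8:ℝ)).add (tendsto_aux2.const_mul (1/4:ℝ)))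
    convert this using 2
    ring
  have h := integral_Ioi_of_hasDerivAt_of_nonneg' hder (fun t _ => by positivity) htend
  simpa using h

lemma intH : ∫ t in Ioi (0:ℝ), t ^ 4 / (1 + t ^ 2) ^ 3 = 3 * π / 16 := by
  have hder : ∀ t ∈ Ici (0:ℝ), HasDerivAt
      (fun t : ℝ => 3/8 * Real.arctan t + (-(5/8) * (t / (1 + t ^ 2)) + 1/4 * (t / (1 + t ^ 2) ^ 2)))
      (t ^ 4 / (1 + t ^ 2) ^ 3) t := by
    intro t _
    have hu : (0:ℝ) < 1 + t ^ 2 := by positivity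
    have h1 := hasDerivAt_one_add_sq t
    have h2 : HasDerivAt (fun t : ℝ => t / (1 + t ^ 2))
        ((1 * (1 + t ^ 2) - t * (2 * t)) / (1 + t ^ 2) ^ 2) t :=
      (hasDerivAt_id t).div h1 hu.ne'
    have h3 : HasDerivAt (fun t : ℝ => (1 + t ^ 2) ^ 2) (2 * (1 + t ^ 2) ^ 1 * (2 * t)) t :=
      h1.pow 2
    have h4 : HasDerivAt (fun t : ℝ => t / (1 + t ^ 2) ^ 2)
        ((1 * (1 + t ^ 2) ^ 2 - t * (2 * (1 + t ^ 2) ^ 1 * (2 * t))) / ((1 + t ^ 2) ^ 2) ^ 2) t :=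
      (hasDerivAt_id t).div h3 (by positivity)
    have h5 := ((Real.hasDerivAt_arctan t).const_mul (3/8:ℝ)).add
      ((h2.const_mul (-(5/8):ℝ)).add (h4.const_mul (1/4:ℝ)))
    refine h5.congr_deriv ?_
    field_simp
    ring
  have htend : Tendsto
      (fun t : ℝ => 3/8 * Real.arctan t + (-(5/8) * (t / (1 + t ^ 2)) + 1/4 * (t / (1 + t ^ 2) ^ 2)))
      atTop (nhds (3 * π / 16)) := by
    have := (tendsto_arctan'.const_mul (3/8:ℝ)).add
      ((tendsto_aux1.const_mul (-(5/8):ℝ)).add (tendsto_aux2.const_mul (1/4:ℝ)))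
    convert this using 2
    ring
  have h := integral_Ioi_of_hasDerivAt_of_nonneg' hder (fun t _ => by positivity) htend
  simpa using h

lemma sqrt3_pos : (0:ℝ) < Real.sqrt 3 := Real.sqrt_pos.2 (by norm_num)

lemma key_sq (x : ℝ) : (x * (Real.sqrt 3)⁻¹) ^ 2 = x ^ 2 / 3 := by
  rw [mul_pow, inv_pow, Real.sq_sqrt (by norm_num : (0:ℝ) ≤ 3), div_eq_mul_inv]

lemma intI1 : ∫ r in Ioi (0:ℝ), 1 / (1 + r ^ 2 / 3) ^ 3 = Real.sqrt 3 * (3 * π / 16) := by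
  have h := integral_comp_mul_right_Ioi (fun t : ℝ => 1 / (1 + t ^ 2) ^ 3) 0
    (b := (Real.sqrt 3)⁻¹) (by positivity)
  simp only [key_sq, zero_mul, smul_eq_mul, inv_inv] at h
  rw [h, intG]

lemma intI2 : ∫ r in Ioi (0:ℝ), r ^ 4 / (9 * (1 + r ^ 2 / 3) ^ 3) = Real.sqrt 3 * (3 * π / 16) := by
  have h := integral_comp_mul_right_Ioi (fun t : ℝ => t ^ 4 / (1 + t ^ 2) ^ 3) 0
    (b := (Real.sqrt 3)⁻¹) (by positivity)
  have hpow : ∀ x : ℝ, (x * (Real.sqrt 3)⁻¹) ^ 4 = x ^ 4 / 9 := by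
    intro x
    have : (x * (Real.sqrt 3)⁻¹) ^ 4 = ((x * (Real.sqrt 3)⁻¹) ^ 2) ^ 2 := by ring
    rw [this, key_sq]
    ring
  simp only [key_sq, hpow, zero_mul, smul_eq_mul, inv_inv] at h
  rw [show (∫ r in Ioi (0:ℝ), r ^ 4 / (9 * (1 + r ^ 2 / 3) ^ 3))
      = ∫ r in Ioi (0:ℝ), r ^ 4 / 9 / (1 + r ^ 2 / 3) ^ 3 by
    congr 1; funext r; rw [div_div]]
  rw [h, intH]

lemma integrableOn_base : IntegrableOn (fun r : ℝ => 1 / (1 + r ^ 2 / 3)) (Ioi 0) := by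
  have hder : ∀ r ∈ Ici (0:ℝ), HasDerivAt
      (fun r : ℝ => Real.sqrt 3 * Real.arctan (r * (Real.sqrt 3)⁻¹)) (1 / (1 + r ^ 2 / 3)) r := by
    intro r _
    have h1 : HasDerivAt (fun r : ℝ => r * (Real.sqrt 3)⁻¹) ((Real.sqrt 3)⁻¹) r := by
      simpa using (hasDerivAt_id r).mul_const ((Real.sqrt 3)⁻¹)
    have h2 := ((Real.hasDerivAt_arctan (r * (Real.sqrt 3)⁻¹)).comp r h1).const_mul (Real.sqrt 3)
    refine h2.congr_deriv ?_
    rw [key_sq]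
    field_simp
  have htend : Tendsto (fun r : ℝ => Real.sqrt 3 * Real.arctan (r * (Real.sqrt 3)⁻¹))
      atTop (nhds (Real.sqrt 3 * (π / 2))) := by
    have hcomp : Tendsto (fun r : ℝ => r * (Real.sqrt 3)⁻¹) atTop atTop :=
      Tendsto.atTop_mul_const (by positivity) tendsto_id
    exact (tendsto_arctan'.comp hcomp).const_mul _
  exact integrableOn_Ioi_deriv_of_nonneg' hder (fun t _ => by positivity) htend

lemma intI3 : ∫ r in Ioi (0:ℝ), (1 - r ^ 2 / 3) / (1 + r ^ 2 / 3) ^ 2 = 0 := by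
  have hder : ∀ r ∈ Ici (0:ℝ), HasDerivAt (fun r : ℝ => r / (1 + r ^ 2 / 3))
      ((1 - r ^ 2 / 3) / (1 + r ^ 2 / 3) ^ 2) r := by
    intro r _
    have hu : (0:ℝ) < 1 + r ^ 2 / 3 := by positivity
    have h1 : HasDerivAt (fun r : ℝ => 1 + r ^ 2 / 3) (2 * r / 3) r := by
      simpa using ((hasDerivAt_pow 2 r).div_const 3).const_add 1
    have h2 := (hasDerivAt_id r).div h1 hu.ne'
    refine h2.congr_deriv ?_
    simp only [id_eq]
    field_simp
    ring
  have hint : IntegrableOn (fun r : ℝ => (1 - r ^ 2 / 3) / (1 + r ^ 2 / 3) ^ 2) (Ioi 0) := by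
    refine integrableOn_base.mono' ?_ ?_
    · refine Continuous.aestronglyMeasurable ?_
      exact (continuous_const.sub ((continuous_pow 2).div_const 3)).div
        ((continuous_const.add ((continuous_pow 2).div_const 3)).pow 2)
        (fun x => by positivity)
    · refine Filter.Eventually.of_forall fun r => ?_
      have hu : (0:ℝ) < 1 + r ^ 2 / 3 := by positivity
      have h1 : |1 - r ^ 2 / 3| ≤ 1 + r ^ 2 / 3 := by
        rw [abs_le]; constructor <;> nlinarith [sq_nonneg r]
      calc |(1 - r ^ 2 / 3) / (1 + r ^ 2 / 3) ^ 2|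
          = |1 - r ^ 2 / 3| / (1 + r ^ 2 / 3) ^ 2 := by
            rw [abs_div, abs_of_pos (by positivity : (0:ℝ) < (1 + r ^ 2 / 3) ^ 2)]
        _ ≤ (1 + r ^ 2 / 3) / (1 + r ^ 2 / 3) ^ 2 := by gcongr
        _ = 1 / (1 + r ^ 2 / 3) := by
            rw [sq (1 + r ^ 2 / 3), ← div_div, div_self hu.ne']
  have htend : Tendsto (fun r : ℝ => r / (1 + r ^ 2 / 3)) atTop (nhds 0) := by
    have hmono : Tendsto (fun r : ℝ => r⁻¹ + r / 3) atTop atTop := by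
      refine tendsto_atTop_mono' _ ?_ (Tendsto.atTop_div_const (by norm_num : (0:ℝ) < 3) tendsto_id)
      filter_upwards [eventually_gt_atTop 0] with t ht
      have : 0 ≤ t⁻¹ := by positivity
      simp only [id]
      linarith
    refine hmono.inv_tendsto_atTop.congr' ?_
    filter_upwards [eventually_gt_atTop 0] with t ht
    simp only [Pi.inv_apply]
    rw [eq_div_iff (by positivity : (1:ℝ) + t ^ 2 / 3 ≠ 0)]
    field_simp
  have h := integral_Ioi_of_hasDerivAt_of_tendsto' hder hint htend
  simpa using h

lemma vol_ball3 : (volume (Metric.ball (0 : EuclideanSpace ℝ (Fin 3)) 1)).toReal = 4 * π / 3 := by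
  rw [EuclideanSpace.volume_ball]
  have hc : Fintype.card (Fin 3) = 3 := by simp
  rw [hc]
  have g32 : Real.Gamma (3 / 2 : ℝ) = Real.sqrt π / 2 := by
    have h : (3 / 2 : ℝ) = 1 / 2 + 1 := by norm_num
    rw [h, Real.Gamma_add_one (by norm_num), Real.Gamma_one_half_eq]
    ring
  have g52 : Real.Gamma ((3 : ℕ) / 2 + 1) = 3 * Real.sqrt π / 4 := by
    push_cast
    rw [Real.Gamma_add_one (by norm_num), g32]
    ring
  have hval : Real.sqrt π ^ 3 / (3 * Real.sqrt π / 4) = 4 * π / 3 := by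
    have hs : Real.sqrt π ^ 2 = π := Real.sq_sqrt Real.pi_pos.le
    have hne : Real.sqrt π ≠ 0 := by positivity
    rw [show Real.sqrt π ^ 3 = Real.sqrt π ^ 2 * Real.sqrt π by ring, hs]
    field_simp
  rw [g52, hval]
  simp [ENNReal.toReal_ofReal (by positivity : (0:ℝ) ≤ 4 * π / 3)]

lemma radial (f : ℝ → ℝ) :
    (∫ x : EuclideanSpace ℝ (Fin 3), f ‖x‖)
      = (4 * π) * ∫ y in Ioi (0:ℝ), y ^ 2 * f y := by
  rw [MeasureTheory.integral_fun_norm_addHaar (volume : Measure (EuclideanSpace ℝ (Fin 3))) f]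
  have hd : Module.finrank ℝ (EuclideanSpace ℝ (Fin 3)) = 3 := by
    simp [finrank_euclideanSpace]
  rw [hd, measureReal_def, vol_ball3]
  simp only [smul_eq_mul, nsmul_eq_mul, Nat.cast_ofNat]
  norm_num
  ring

lemma hasDerivAt_qfun (r : ℝ) :
    HasDerivAt (fun r : ℝ => 1 / Real.sqrt (1 + r ^ 2 / 3))
      (-(r / 3) / (Real.sqrt (1 + r ^ 2 / 3) * (1 + r ^ 2 / 3))) r := by
  have hu : (0:ℝ) < 1 + r ^ 2 / 3 := by positivity
  have hs : 0 < Real.sqrt (1 + r ^ 2 / 3) := Real.sqrt_pos.2 hu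
  have h1 : HasDerivAt (fun r : ℝ => 1 + r ^ 2 / 3) (2 * r / 3) r := by
    simpa using ((hasDerivAt_pow 2 r).div_const 3).const_add 1
  have h2 : HasDerivAt (fun r : ℝ => Real.sqrt (1 + r ^ 2 / 3))
      (1 / (2 * Real.sqrt (1 + r ^ 2 / 3)) * (2 * r / 3)) r :=
    (Real.hasDerivAt_sqrt hu.ne').comp r h1
  have h3 := h2.inv hs.ne'
  simp only [one_div]
  refine h3.congr_deriv ?_
  rw [Real.sq_sqrt hu.le]
  rw [neg_div, neg_div, neg_inj]
  field_simp

lemma hasDerivAt_hfun (s : ℝ) (hs0 : 0 ≤ s) :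
    HasDerivAt (fun s : ℝ => 1 / Real.sqrt (1 + s / 3))
      (-(1 / 6) / (Real.sqrt (1 + s / 3) * (1 + s / 3))) s := by
  have hu : (0:ℝ) < 1 + s / 3 := by positivity
  have hs : 0 < Real.sqrt (1 + s / 3) := Real.sqrt_pos.2 hu
  have h1 : HasDerivAt (fun s : ℝ => 1 + s / 3) (3⁻¹) s := by
    simpa using ((hasDerivAt_id s).div_const 3).const_add 1
  have h2 : HasDerivAt (fun s : ℝ => Real.sqrt (1 + s / 3))
      (1 / (2 * Real.sqrt (1 + s / 3)) * 3⁻¹) s :=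
    (Real.hasDerivAt_sqrt hu.ne').comp s h1
  have h3 := h2.inv hs.ne'
  simp only [one_div]
  refine h3.congr_deriv ?_
  rw [Real.sq_sqrt hu.le, neg_div, neg_div, neg_inj]
  field_simp
  ring

lemma hasGradientAt_Qfun (x : EuclideanSpace ℝ (Fin 3)) :
    HasGradientAt (fun x : EuclideanSpace ℝ (Fin 3) => 1 / Real.sqrt (1 + ‖x‖ ^ 2 / 3))
      ((-(1 / 3) / (Real.sqrt (1 + ‖x‖ ^ 2 / 3) * (1 + ‖x‖ ^ 2 / 3))) • x) x := by
  have hd := hasDerivAt_hfun (‖x‖ ^ 2) (by positivity)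
  have hn : HasFDerivAt (fun x : EuclideanSpace ℝ (Fin 3) => ‖x‖ ^ 2) (2 • (innerSL ℝ x)) x :=
    (hasStrictFDerivAt_norm_sq x).hasFDerivAt
  have hcomp := hd.comp_hasFDerivAt x hn
  rw [hasGradientAt_iff_hasFDerivAt]
  refine hcomp.congr_fderiv ?_
  ext y
  simp only [InnerProductSpace.toDual_apply_apply, ContinuousLinearMap.coe_smul', Pi.smul_apply,
    innerSL_apply_apply, smul_eq_mul, real_inner_smul_left]
  ring


/-- with `Q(x) = (1+|x|²/3)^{-1/2}` and `u₁ = Q_r + Q/r`, one has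
`½∫u₁² = 3√3π²/8 = ½‖∇Q‖²_{L²}`, `∫(2Q_rQ/r + Q²/r²) = 0`, and
`‖u₁‖_{L²} = ‖∇Q‖_{L²}`. -/
theorem energy_computation
    (q : ℝ → ℝ) (hq : ∀ r : ℝ, q r = 1 / Real.sqrt (1 + r ^ 2 / 3))
    (Q : EuclideanSpace ℝ (Fin 3) → ℝ) (hQ : ∀ x, Q x = q ‖x‖)
    (u₁ : EuclideanSpace ℝ (Fin 3) → ℝ)
    (hu₁ : ∀ x, u₁ x = deriv q ‖x‖ + q ‖x‖ / ‖x‖) :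
    (1 / 2) * (∫ x : EuclideanSpace ℝ (Fin 3), (u₁ x) ^ 2)
        = 3 * Real.sqrt 3 * Real.pi ^ 2 / 8
    ∧ (1 / 2) * (∫ x : EuclideanSpace ℝ (Fin 3), ‖gradient Q x‖ ^ 2)
        = 3 * Real.sqrt 3 * Real.pi ^ 2 / 8
    ∧ (∫ x : EuclideanSpace ℝ (Fin 3),
        (2 * deriv q ‖x‖ * q ‖x‖ / ‖x‖ + (q ‖x‖) ^ 2 / ‖x‖ ^ 2)) = 0
    ∧ (∫ x : EuclideanSpace ℝ (Fin 3), (u₁ x) ^ 2)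
        = ∫ x : EuclideanSpace ℝ (Fin 3), ‖gradient Q x‖ ^ 2 := by
  obtain rfl : q = fun r : ℝ => 1 / Real.sqrt (1 + r ^ 2 / 3) := funext hq
  have hdq : deriv (fun r : ℝ => 1 / Real.sqrt (1 + r ^ 2 / 3))
      = fun r : ℝ => -(r / 3) / (Real.sqrt (1 + r ^ 2 / 3) * (1 + r ^ 2 / 3)) :=
    funext fun r => (hasDerivAt_qfun r).deriv
  have key1 : (∫ x : EuclideanSpace ℝ (Fin 3), (u₁ x) ^ 2)
      = 3 * Real.sqrt 3 * π ^ 2 / 4 := by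
    have e1 : (∫ x : EuclideanSpace ℝ (Fin 3), (u₁ x) ^ 2)
        = ∫ x : EuclideanSpace ℝ (Fin 3),
          (fun r : ℝ => (deriv (fun r : ℝ => 1 / Real.sqrt (1 + r ^ 2 / 3)) r
            + (1 / Real.sqrt (1 + r ^ 2 / 3)) / r) ^ 2) ‖x‖ := by
      congr 1
      funext x
      rw [hu₁ x]
    rw [e1, radial (fun r : ℝ => (deriv (fun r : ℝ => 1 / Real.sqrt (1 + r ^ 2 / 3)) r
            + (1 / Real.sqrt (1 + r ^ 2 / 3)) / r) ^ 2)]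
    have e2 : (∫ y in Ioi (0:ℝ), y ^ 2 *
        (fun r : ℝ => (deriv (fun r : ℝ => 1 / Real.sqrt (1 + r ^ 2 / 3)) r
            + (1 / Real.sqrt (1 + r ^ 2 / 3)) / r) ^ 2) y)
        = ∫ y in Ioi (0:ℝ), 1 / (1 + y ^ 2 / 3) ^ 3 := by
      refine setIntegral_congr_fun measurableSet_Ioi fun y hy => ?_
      have hy0 : (0:ℝ) < y := hy
      have hu : (0:ℝ) < 1 + y ^ 2 / 3 := by positivity
      have hs : 0 < Real.sqrt (1 + y ^ 2 / 3) := Real.sqrt_pos.2 hu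
      have hsq : Real.sqrt (1 + y ^ 2 / 3) ^ 2 = 1 + y ^ 2 / 3 := Real.sq_sqrt hu.le
      simp only [hdq]
      have hsum : -(y / 3) / (Real.sqrt (1 + y ^ 2 / 3) * (1 + y ^ 2 / 3))
          + (1 / Real.sqrt (1 + y ^ 2 / 3)) / y
          = 1 / (y * (Real.sqrt (1 + y ^ 2 / 3) * (1 + y ^ 2 / 3))) := by
        field_simp
        ring
      rw [hsum, div_pow, one_pow, mul_pow, mul_pow, hsq]
      field_simp
    rw [e2, intI1]
    ring
  have hQf : Q = fun x : EuclideanSpace ℝ (Fin 3) => 1 / Real.sqrt (1 + ‖x‖ ^ 2 / 3) :=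
    funext fun x => hQ x
  have key2 : (∫ x : EuclideanSpace ℝ (Fin 3), ‖gradient Q x‖ ^ 2)
      = 3 * Real.sqrt 3 * π ^ 2 / 4 := by
    have hgrad : ∀ x : EuclideanSpace ℝ (Fin 3),
        ‖gradient Q x‖ ^ 2 = (fun r : ℝ => r ^ 2 / (9 * (1 + r ^ 2 / 3) ^ 3)) ‖x‖ := by
      intro x
      rw [hQf, (hasGradientAt_Qfun x).gradient, norm_smul, mul_pow, Real.norm_eq_abs, sq_abs]
      have hu : (0:ℝ) < 1 + ‖x‖ ^ 2 / 3 := by positivity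
      have hsq : Real.sqrt (1 + ‖x‖ ^ 2 / 3) ^ 2 = 1 + ‖x‖ ^ 2 / 3 := Real.sq_sqrt hu.le
      simp only []
      rw [div_pow, mul_pow, hsq]
      field_simp
      ring
    have e1 : (∫ x : EuclideanSpace ℝ (Fin 3), ‖gradient Q x‖ ^ 2)
        = ∫ x : EuclideanSpace ℝ (Fin 3),
          (fun r : ℝ => r ^ 2 / (9 * (1 + r ^ 2 / 3) ^ 3)) ‖x‖ := by
      congr 1
      funext x
      rw [hgrad x]
    rw [e1, radial (fun r : ℝ => r ^ 2 / (9 * (1 + r ^ 2 / 3) ^ 3))]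
    have e2 : (∫ y in Ioi (0:ℝ), y ^ 2 * (fun r : ℝ => r ^ 2 / (9 * (1 + r ^ 2 / 3) ^ 3)) y)
        = ∫ y in Ioi (0:ℝ), y ^ 4 / (9 * (1 + y ^ 2 / 3) ^ 3) := by
      congr 1
      funext y
      simp only []
      ring
    rw [e2, intI2]
    ring
  have key3 : (∫ x : EuclideanSpace ℝ (Fin 3),
      (2 * deriv (fun r : ℝ => 1 / Real.sqrt (1 + r ^ 2 / 3)) ‖x‖
        * ((fun r : ℝ => 1 / Real.sqrt (1 + r ^ 2 / 3)) ‖x‖) / ‖x‖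
        + ((fun r : ℝ => 1 / Real.sqrt (1 + r ^ 2 / 3)) ‖x‖) ^ 2 / ‖x‖ ^ 2)) = 0 := by
    refine Eq.trans (radial (fun r : ℝ => 2 * deriv (fun r : ℝ => 1 / Real.sqrt (1 + r ^ 2 / 3)) r
              * (1 / Real.sqrt (1 + r ^ 2 / 3)) / r
              + (1 / Real.sqrt (1 + r ^ 2 / 3)) ^ 2 / r ^ 2)) ?_
    calc (4 * π) * (∫ y in Ioi (0:ℝ), y ^ 2 *
            (fun r : ℝ => 2 * deriv (fun r : ℝ => 1 / Real.sqrt (1 + r ^ 2 / 3)) r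
              * (1 / Real.sqrt (1 + r ^ 2 / 3)) / r
              + (1 / Real.sqrt (1 + r ^ 2 / 3)) ^ 2 / r ^ 2) y)
        = (4 * π) * ∫ y in Ioi (0:ℝ), (1 - y ^ 2 / 3) / (1 + y ^ 2 / 3) ^ 2 := by
          congr 1
          refine setIntegral_congr_fun measurableSet_Ioi fun y hy => ?_
          have hy0 : (0:ℝ) < y := hy
          have hu : (0:ℝ) < 1 + y ^ 2 / 3 := by positivity
          have hs : 0 < Real.sqrt (1 + y ^ 2 / 3) := Real.sqrt_pos.2 hu
          have hsq : Real.sqrt (1 + y ^ 2 / 3) ^ 2 = 1 + y ^ 2 / 3 := Real.sq_sqrt hu.le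
          simp only [hdq]
          set s := Real.sqrt (1 + y ^ 2 / 3) with hsdef
          rw [div_pow, one_pow, hsq]
          field_simp
          linear_combination (6*y^2) * hsq
      _ = 0 := by rw [intI3]; ring
  exact ⟨by rw [key1]; ring, by rw [key2]; ring, key3, by rw [key1, key2]⟩
end
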